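/- arXiv:0909.1211 — 8 statements merged into one kernel-verified Lean document; each statement's English description precedes it below -/
import Mathlib

section
/- For every t ∈ (0, 1/π), the inequality (π/2) · tan((1/2) · arcsin(2t)) < tanh((1/2) · artanh(π·t)) holds. -/
/-!
Both sides are values of `f x = x / (1 + √(1 - x²))`: the half-angle formulas give
`tan (θ / 2) = f (sin θ)` and `tanh (y / 2) = f (tanh y)`, so the left side is `(π / 2) f (2t)`
and the right side is `f (πt)`. Since `f x / x = 1 / (1 + √(1 - x²))` is strictly increasing on
`[0, 1]` and `2t < πt < 1`, we get `f (2t) / (2t) < f (πt) / (πt)`, which is the claim.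
-/

/-- The real inverse hyperbolic tangent, `artanh x = (1/2) log((1+x)/(1-x))`. -/
noncomputable def Real.artanh' (x : ℝ) : ℝ := 1 / 2 * Real.log ((1 + x) / (1 - x))

open Set

namespace Real

theorem artanh'_eq_artanh {x : ℝ} (hx : x ∈ Icc (-1) 1) : artanh' x = artanh x :=
  (artanh_eq_half_log hx).symm

theorem tan_half_eq_sin_div_one_add_cos (θ : ℝ) : tan (θ / 2) = sin θ / (1 + cos θ) := by
  obtain ⟨φ, rfl⟩ : ∃ φ, θ = 2 * φ := ⟨θ / 2, by ring⟩
  rw [mul_div_cancel_left₀ φ two_ne_zero, tan_eq_sin_div_cos, sin_two_mul, cos_two_mul]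
  rcases eq_or_ne (cos φ) 0 with h | h
  · -- both sides are junk divisions by zero
    simp [h]
  · field_simp
    ring

theorem tanh_half_eq_sinh_div_one_add_cosh (y : ℝ) : tanh (y / 2) = sinh y / (1 + cosh y) := by
  obtain ⟨z, rfl⟩ : ∃ z, y = 2 * z := ⟨y / 2, by ring⟩
  have := cosh_pos z
  rw [mul_div_cancel_left₀ z two_ne_zero, tanh_eq_sinh_div_cosh, sinh_two_mul, cosh_two_mul]
  field_simp
  linear_combination (-sinh z) * cosh_sq z

theorem tan_half_arcsin {x : ℝ} (hx₁ : -1 ≤ x) (hx₂ : x ≤ 1) :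
    tan (arcsin x / 2) = x / (1 + √(1 - x ^ 2)) := by
  rw [tan_half_eq_sin_div_one_add_cos, sin_arcsin hx₁ hx₂, cos_arcsin]

theorem tanh_half_artanh {x : ℝ} (hx : x ∈ Ioo (-1) 1) :
    tanh (artanh x / 2) = x / (1 + √(1 - x ^ 2)) := by
  have : 0 < √(1 - x ^ 2) := sqrt_pos.2 (by nlinarith [hx.1, hx.2])
  rw [tanh_half_eq_sinh_div_one_add_cosh, sinh_artanh hx, cosh_artanh hx]
  field_simp
  ring

end Real

theorem strictAntiOn_one_add_sqrt_one_sub_sq :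
    StrictAntiOn (fun x : ℝ => 1 + √(1 - x ^ 2)) (Icc 0 1) := by
  intro a ha b hb hab
  have : √(1 - b ^ 2) < √(1 - a ^ 2) :=
    Real.sqrt_lt_sqrt (by nlinarith [hb.1, hb.2]) (by nlinarith [ha.1])
  simpa using this

open Real

theorem stmt2 (t : ℝ) (ht0 : 0 < t) (ht : t < 1 / Real.pi) :
    Real.pi / 2 * Real.tan (1 / 2 * Real.arcsin (2 * t)) <
      Real.tanh (1 / 2 * Real.artanh' (Real.pi * t)) := by
  have hπt : π * t < 1 := (lt_div_iff₀' pi_pos).mp ht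
  have h2t : 2 * t < π * t := mul_lt_mul_of_pos_right (by linarith [pi_gt_three]) ht0
  have hπt0 : 0 < π * t := by positivity
  rw [artanh'_eq_artanh ⟨by linarith, hπt.le⟩, one_div_mul_eq_div, one_div_mul_eq_div,
    tan_half_arcsin (by linarith) (by linarith), tanh_half_artanh ⟨by linarith, hπt⟩]
  calc π / 2 * (2 * t / (1 + √(1 - (2 * t) ^ 2)))
      = π * t / (1 + √(1 - (2 * t) ^ 2)) := by ring
    _ < π * t / (1 + √(1 - (π * t) ^ 2)) :=
      div_lt_div_of_pos_left hπt0 (by positivity)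
        (strictAntiOn_one_add_sqrt_one_sub_sq ⟨by linarith, by linarith⟩ ⟨hπt0.le, hπt.le⟩
          h2t)
end

section
/- Let K be a bounded linear operator between Hilbert spaces with ‖K‖ < 1. Then the operator X := K (I - K*K)^{-1/2} satisfies ‖X‖ = ‖K‖ / √(1 - ‖K‖²). -/
/-!
With `A = K†K` and `C = (1 - A)^{-1/2}`, the operator `C A C = X†X` is `h(A)` for
`h t = t / (1 - t)`. Since `h` is nonnegative and increasing on `σ(A) ⊆ [0, ‖A‖]` and
`‖A‖ ∈ σ(A)`, we get `‖X‖² = ‖h(A)‖ = h ‖A‖`, and `‖A‖ = ‖K‖²`.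
-/

lemma monotoneOn_div_one_sub : MonotoneOn (fun t : ℝ => t / (1 - t)) (Set.Iio 1) := by
  intro x hx y hy hxy
  rw [div_le_div_iff₀ (sub_pos.2 hx) (sub_pos.2 hy)]
  nlinarith

lemma inv_sqrt_one_sub_mul_mul_inv_sqrt_one_sub {t : ℝ} (ht : t < 1) :
    (√(1 - t))⁻¹ * t * (√(1 - t))⁻¹ = t / (1 - t) := by
  rw [mul_right_comm, ← mul_inv, Real.mul_self_sqrt (sub_nonneg.2 ht.le), div_eq_inv_mul]

section CStarAlgebra

variable {A : Type*} [CStarAlgebra A] [PartialOrder A] [StarOrderedRing A]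

lemma norm_cfc_eq_apply_norm_of_monotoneOn [Nontrivial A] {a : A} (ha : 0 ≤ a) {f : ℝ → ℝ}
    (hf : ContinuousOn f (spectrum ℝ a)) (hf_nonneg : ∀ x ∈ spectrum ℝ a, 0 ≤ f x)
    (hf_mono : MonotoneOn f (spectrum ℝ a)) : ‖cfc f a‖ = f ‖a‖ := by
  have hmem : ‖a‖ ∈ spectrum ℝ a := CStarAlgebra.norm_mem_spectrum_of_nonneg ha
  refine le_antisymm (norm_cfc_le (hf_nonneg _ hmem) fun x hx => ?_) ?_
  · rw [Real.norm_of_nonneg (hf_nonneg x hx)]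
    exact hf_mono hx hmem <| (le_abs_self x).trans (spectrum.norm_le_norm_of_mem hx)
  · exact (Real.le_norm_self _).trans (norm_apply_le_norm_cfc f a hmem hf)

lemma sqrt_one_sub_eq_cfc {a : A} (ha : IsSelfAdjoint a) (ha1 : ∀ x ∈ spectrum ℝ a, x ≤ 1) :
    CFC.sqrt (1 - a) = cfc (fun t : ℝ => √(1 - t)) a := by
  refine CFC.sqrt_unique ?_ (cfc_nonneg fun _ _ => Real.sqrt_nonneg _)
  rw [← cfc_mul .., cfc_congr fun x hx => Real.mul_self_sqrt (sub_nonneg.2 (ha1 x hx)),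
    cfc_sub .., cfc_const_one ℝ a, cfc_id' ℝ a]

lemma inverse_sqrt_one_sub_eq_cfc {a : A} (ha : IsSelfAdjoint a)
    (ha1 : ∀ x ∈ spectrum ℝ a, x < 1) :
    Ring.inverse (CFC.sqrt (1 - a)) = cfc (fun t : ℝ => (√(1 - t))⁻¹) a := by
  rw [sqrt_one_sub_eq_cfc ha fun x hx => (ha1 x hx).le,
    cfc_inv _ _ fun x hx => (Real.sqrt_pos.2 (sub_pos.2 (ha1 x hx))).ne']

lemma norm_inverse_sqrt_one_sub_mul_mul_inverse_sqrt_one_sub {a : A} (ha : 0 ≤ a)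
    (ha1 : ‖a‖ < 1) :
    ‖Ring.inverse (CFC.sqrt (1 - a)) * a * Ring.inverse (CFC.sqrt (1 - a))‖ =
      ‖a‖ / (1 - ‖a‖) := by
  nontriviality A
  have hspec : spectrum ℝ a ⊆ Set.Ico 0 1 := fun x hx =>
    ⟨spectrum_nonneg_of_nonneg ha hx,
      ((le_abs_self x).trans (spectrum.norm_le_norm_of_mem hx)).trans_lt ha1⟩
  have hlt : ∀ x ∈ spectrum ℝ a, x < 1 := fun x hx => (hspec hx).2
  have hcont : ContinuousOn (fun t : ℝ => (√(1 - t))⁻¹) (spectrum ℝ a) :=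
    ContinuousOn.inv₀ (by fun_prop) fun x hx => (Real.sqrt_pos.2 (sub_pos.2 (hlt x hx))).ne'
  have hprod : cfc (fun t : ℝ => (√(1 - t))⁻¹) a * a * cfc (fun t : ℝ => (√(1 - t))⁻¹) a =
      cfc (fun t : ℝ => t / (1 - t)) a := by
    calc _ = cfc (fun t : ℝ => (√(1 - t))⁻¹) a * cfc (fun t : ℝ => t) a *
          cfc (fun t : ℝ => (√(1 - t))⁻¹) a := by rw [cfc_id' ℝ a]
      _ = cfc (fun t : ℝ => (√(1 - t))⁻¹ * t * (√(1 - t))⁻¹) a := by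
          rw [cfc_mul .., cfc_mul ..]
      _ = cfc (fun t : ℝ => t / (1 - t)) a :=
          cfc_congr fun x hx => inv_sqrt_one_sub_mul_mul_inv_sqrt_one_sub (hlt x hx)
  rw [inverse_sqrt_one_sub_eq_cfc ha.isSelfAdjoint hlt, hprod,
    norm_cfc_eq_apply_norm_of_monotoneOn ha _ _
      (monotoneOn_div_one_sub.mono fun x hx => hlt x hx)]
  · exact ContinuousOn.div (by fun_prop) (by fun_prop) fun x hx => (sub_pos.2 (hlt x hx)).ne'
  · exact fun x hx => div_nonneg (hspec hx).1 (sub_nonneg.2 (hlt x hx).le)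

end CStarAlgebra

open ContinuousLinearMap in
theorem stmt7 {H₀ H₁ : Type*}
    [NormedAddCommGroup H₀] [InnerProductSpace ℂ H₀] [CompleteSpace H₀]
    [NormedAddCommGroup H₁] [InnerProductSpace ℂ H₁] [CompleteSpace H₁]
    (K : H₀ →L[ℂ] H₁) (hK : ‖K‖ < 1) :
    ‖K.comp (Ring.inverse (CFC.sqrt (1 - (adjoint K).comp K)))‖ =
      ‖K‖ / Real.sqrt (1 - ‖K‖ ^ 2) := by
  set A := (adjoint K).comp K
  set C := Ring.inverse (CFC.sqrt (1 - A))
  have hA : 0 ≤ A := (nonneg_iff_isPositive A).2 K.isPositive_adjoint_comp_self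
  have hnormA : ‖A‖ = ‖K‖ ^ 2 := by rw [norm_adjoint_comp_self, sq]
  have hC : IsSelfAdjoint C := (CFC.sqrt_nonneg (1 - A)).isSelfAdjoint.ringInverse
  have hX : adjoint (K.comp C) ∘L K.comp C = C * A * C := by
    rw [adjoint_comp, hC.adjoint_eq]
    rfl
  have hXsq : ‖K.comp C‖ ^ 2 = ‖K‖ ^ 2 / (1 - ‖K‖ ^ 2) := by
    rw [sq ‖K.comp C‖, ← norm_adjoint_comp_self, hX, ← hnormA,
      norm_inverse_sqrt_one_sub_mul_mul_inverse_sqrt_one_sub hA (by nlinarith [norm_nonneg K])]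
  rw [← Real.sqrt_sq (norm_nonneg (K.comp C)), hXsq, Real.sqrt_div (sq_nonneg _),
    Real.sqrt_sq (norm_nonneg K)]
end

section
/- Let b, d be real numbers with 0 ≤ b < d/2, let A₀ be the 2×2 real diagonal matrix diag(-d, d), A₁ = 0 (on ℂ), and B the 2×1 matrix (0, b)ᵀ. Then the 1×2 matrix K = (0, -κ) with κ = b/(d/2 + √(d²/4 - b²)) satisfies the Riccati equation K A₀ - A₁ K + K B K = -B*, and moreover ‖K‖ = ‖B‖ / dist(spec(A₀+BK), spec(A₁)). -/
/-!
The feedback `K = (0, -κ)` makes the closed loop `A₀ + B K = diag(-d, d - b κ)`, and the only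
nontrivial entry of the Riccati equation is the quadratic `b κ² - d κ + b = 0`. Its root
`κ = b / r`, with `r = d/2 + √(d²/4 - b²)` the larger root of `r² - d r + b² = 0`, gives
`d - b κ = r`. As `r ≤ d`, the spectrum `{-d, r}` lies at distance `r` from `spec A₁ = {0}`,
and `‖K‖ = κ = b / r = ‖B‖ / r`.
-/

open Matrix
open scoped Matrix.Norms.L2Operator

/-- Distance between two sets of complex numbers. -/
noncomputable def specDist (S T : Set ℂ) : ℝ := sInf (Set.image2 dist S T)

lemma specDist_pair_singleton (a b c : ℂ) :
    specDist {a, b} {c} = min (dist a c) (dist b c) := by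
  rw [specDist, Set.image2_singleton_right, Set.image_pair, csInf_pair]

namespace Matrix

variable {𝕜 m n : Type*} [RCLike 𝕜] [Fintype m] [Fintype n] [DecidableEq n]

lemma l2_opNorm_sq_eq_sum_col [Unique n] (A : Matrix m n 𝕜) :
    ‖A‖ ^ 2 = ∑ i, ‖A i default‖ ^ 2 := by
  have hA : Aᴴ * A = diagonal fun _ ↦ ((∑ i, ‖A i default‖ ^ 2 : ℝ) : 𝕜) := by
    ext j k
    rw [Subsingleton.elim j default, Subsingleton.elim k default]
    simp [mul_apply, RCLike.conj_mul]
  rw [sq, ← l2_opNorm_conjTranspose_mul_self A, hA, l2_opNorm_diagonal, pi_norm_const,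
    RCLike.norm_ofReal, abs_of_nonneg (by positivity)]

lemma l2_opNorm_sq_eq_sum_row [DecidableEq m] [Unique m] (A : Matrix m n 𝕜) :
    ‖A‖ ^ 2 = ∑ j, ‖A default j‖ ^ 2 := by
  rw [← l2_opNorm_conjTranspose, l2_opNorm_sq_eq_sum_col]
  simp

lemma l2_opNorm_col_zero_cons (z : 𝕜) : ‖(!![0; z] : Matrix (Fin 2) (Fin 1) 𝕜)‖ = ‖z‖ := by
  rw [← sq_eq_sq₀ (norm_nonneg _) (norm_nonneg _), l2_opNorm_sq_eq_sum_col]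
  simp

lemma l2_opNorm_row_zero_cons (z : 𝕜) : ‖(!![0, z] : Matrix (Fin 1) (Fin 2) 𝕜)‖ = ‖z‖ := by
  rw [← sq_eq_sq₀ (norm_nonneg _) (norm_nonneg _), l2_opNorm_sq_eq_sum_row]
  simp

end Matrix

/-- The larger root of `r ^ 2 - d * r + b ^ 2 = 0`. -/
noncomputable def largerRoot (b d : ℝ) : ℝ := d / 2 + √(d ^ 2 / 4 - b ^ 2)

lemma largerRoot_pos {b d : ℝ} (hd : 0 < d) : 0 < largerRoot b d := by
  unfold largerRoot; positivity

lemma largerRoot_le {b d : ℝ} (hd : 0 ≤ d) : largerRoot b d ≤ d := by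
  have : √(d ^ 2 / 4 - b ^ 2) ≤ d / 2 :=
    Real.sqrt_le_iff.mpr ⟨by linarith, by nlinarith⟩
  unfold largerRoot; linarith

lemma largerRoot_mul_sub_self {b d : ℝ} (h : b ^ 2 ≤ d ^ 2 / 4) :
    largerRoot b d * (d - largerRoot b d) = b ^ 2 := by
  have := Real.sq_sqrt (sub_nonneg.mpr h)
  unfold largerRoot; linear_combination -this

lemma sub_mul_div_largerRoot {b d : ℝ} (hd : 0 < d) (h : b ^ 2 ≤ d ^ 2 / 4) :
    d - b * (b / largerRoot b d) = largerRoot b d := by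
  have hr : largerRoot b d ≠ 0 := (largerRoot_pos hd).ne'
  have := largerRoot_mul_sub_self h
  field_simp
  linear_combination this

lemma closedLoop_eq_diagonal {R : Type*} [CommRing R] (d b κ : R) :
    !![-d, 0; 0, d] + !![0; b] * !![0, -κ] = diagonal ![-d, d - b * κ] := by
  ext i j; fin_cases i <;> fin_cases j <;> simp; ring

theorem stmt9 (b d : ℝ) (hb : 0 ≤ b) (hbd : b < d / 2)
    (A₀ : Matrix (Fin 2) (Fin 2) ℂ) (hA₀ : A₀ = !![-(d : ℂ), 0; 0, (d : ℂ)])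
    (A₁ : Matrix (Fin 1) (Fin 1) ℂ) (hA₁ : A₁ = 0)
    (B : Matrix (Fin 2) (Fin 1) ℂ) (hB : B = !![(0 : ℂ); (b : ℂ)])
    (κ : ℝ) (hκ : κ = b / (d / 2 + Real.sqrt (d ^ 2 / 4 - b ^ 2)))
    (K : Matrix (Fin 1) (Fin 2) ℂ) (hK : K = !![(0 : ℂ), -(κ : ℂ)]) :
    K * A₀ - A₁ * K + K * B * K = -Bᴴ ∧
      ‖K‖ = ‖B‖ / specDist (spectrum ℂ (A₀ + B * K)) (spectrum ℂ A₁) := by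
  change κ = b / largerRoot b d at hκ
  have hd : 0 < d := by linarith
  set r := largerRoot b d
  have hr : 0 < r := largerRoot_pos hd
  have hκ0 : 0 ≤ κ := hκ ▸ div_nonneg hb hr.le
  have hκr : κ * r = b := by rw [hκ, div_mul_cancel₀ _ hr.ne']
  have hclosed : d - b * κ = r := hκ ▸ sub_mul_div_largerRoot hd (by nlinarith)
  have hriccati : (κ * d - b * κ ^ 2 : ℂ) = b := by
    norm_cast; linear_combination κ * hclosed + hκr
  subst hA₀ hA₁ hB hK
  constructor
  · ext i j; fin_cases i; fin_cases j <;> simp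
    linear_combination -hriccati
  · rw [closedLoop_eq_diagonal, ← Complex.ofReal_mul, ← Complex.ofReal_sub, hclosed,
      spectrum_diagonal, range_cons_cons_empty, spectrum.zero_eq, specDist_pair_singleton,
      l2_opNorm_row_zero_cons, l2_opNorm_col_zero_cons]
    simp only [dist_zero_right, norm_neg, Complex.norm_real, Real.norm_eq_abs]
    rw [abs_of_nonneg hκ0, abs_of_nonneg hb, abs_of_pos hd, abs_of_pos hr,
      min_eq_right (largerRoot_le hd.le), hκ]
end

section
/- Let b, d be real numbers with 0 ≤ b < d. Set A₀ = 0 on ℂ, A₁ = diag(-d, d) on ℂ², and B = (b/√2, b/√2) : ℂ² → ℂ. Then K = (-b/(√2 d), b/(√2 d))ᵀ : ℂ → ℂ² solves K A₀ - A₁ K + K B K = -B*, and ‖K‖ = b/d = ‖B‖ / dist(spec(A₀), spec(A₁)). -/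
open Matrix
open scoped Matrix.Norms.L2Operator

/-!
Since `B K = 0` and `A₁ K = Bᴴ`, the Riccati equation reduces to `-A₁ K = -Bᴴ`. A matrix `A` with
`Aᴴ A = c² 1` (or `A Aᴴ = c² 1`) has operator norm `c` by the C⋆-identity; this gives `‖K‖ = b / d`
and `‖B‖ = b`, while the spectra `{0}` and `{-d, d}` are at distance `d`.
-/

section OperatorNorm

variable {𝕜 : Type*} [RCLike 𝕜] {m n : Type*} [Fintype m] [Fintype n]

theorem Matrix.l2_opNorm_eq_of_conjTranspose_mul_self_eq_smul_one [DecidableEq n] [Nonempty n]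
    {A : Matrix m n 𝕜} {c : ℝ} (hc : 0 ≤ c) (hA : Aᴴ * A = ((c ^ 2 : ℝ) : 𝕜) • 1) : ‖A‖ = c := by
  have h := l2_opNorm_conjTranspose_mul_self A
  rw [hA, norm_smul, norm_one, mul_one, RCLike.norm_ofReal, abs_of_nonneg (by positivity), sq] at h
  exact (mul_self_inj_of_nonneg (norm_nonneg A) hc).mp h.symm

theorem Matrix.l2_opNorm_eq_of_mul_conjTranspose_self_eq_smul_one [DecidableEq m] [DecidableEq n]
    [Nonempty m] {A : Matrix m n 𝕜} {c : ℝ} (hc : 0 ≤ c) (hA : A * Aᴴ = ((c ^ 2 : ℝ) : 𝕜) • 1) :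
    ‖A‖ = c := by
  rw [← l2_opNorm_conjTranspose]
  exact l2_opNorm_eq_of_conjTranspose_mul_self_eq_smul_one hc (by rwa [conjTranspose_conjTranspose])

end OperatorNorm

theorem Matrix.l2_opNorm_col_neg_self (x : ℝ) :
    ‖(!![((-x : ℝ) : ℂ); (x : ℂ)] : Matrix (Fin 2) (Fin 1) ℂ)‖ = √2 * |x| := by
  refine l2_opNorm_eq_of_conjTranspose_mul_self_eq_smul_one (by positivity) ?_
  ext i j; fin_cases i; fin_cases j
  simp [Matrix.mul_apply, mul_pow]
  ring

theorem Matrix.l2_opNorm_row_self (x : ℝ) :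
    ‖(!![(x : ℂ), (x : ℂ)] : Matrix (Fin 1) (Fin 2) ℂ)‖ = √2 * |x| := by
  refine l2_opNorm_eq_of_mul_conjTranspose_self_eq_smul_one (by positivity) ?_
  ext i j; fin_cases i; fin_cases j
  simp [Matrix.mul_apply, mul_pow]
  ring

theorem specDist_singleton_of_forall_dist_eq {z : ℂ} {T : Set ℂ} {r : ℝ} (hT : T.Nonempty)
    (h : ∀ t ∈ T, dist z t = r) : specDist {z} T = r := by
  have : Set.image2 dist {z} T = {r} := by
    rw [Set.image2_singleton_left, Set.image_congr h]
    exact hT.image_const r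
  rw [specDist, this, csInf_singleton]

theorem Matrix.spectrum_diagonal_fin_two (x y : ℂ) :
    spectrum ℂ (!![x, 0; 0, y] : Matrix (Fin 2) (Fin 2) ℂ) = {x, y} := by
  rw [← diagonal_vec2, spectrum_diagonal, Matrix.range_cons, Matrix.range_cons, Matrix.range_empty]
  simp [Set.pair_comm]

theorem stmt10 (b d : ℝ) (hb : 0 ≤ b) (hbd : b < d)
    (A₀ : Matrix (Fin 1) (Fin 1) ℂ) (hA₀ : A₀ = 0)
    (A₁ : Matrix (Fin 2) (Fin 2) ℂ) (hA₁ : A₁ = !![-(d : ℂ), 0; 0, (d : ℂ)])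
    (B : Matrix (Fin 1) (Fin 2) ℂ)
    (hB : B = !![((b / Real.sqrt 2 : ℝ) : ℂ), ((b / Real.sqrt 2 : ℝ) : ℂ)])
    (K : Matrix (Fin 2) (Fin 1) ℂ)
    (hK : K = !![((-(b / (Real.sqrt 2 * d)) : ℝ) : ℂ); ((b / (Real.sqrt 2 * d) : ℝ) : ℂ)]) :
    K * A₀ - A₁ * K + K * B * K = -Bᴴ ∧
      ‖K‖ = b / d ∧
      ‖K‖ = ‖B‖ / specDist (spectrum ℂ A₀) (spectrum ℂ A₁) := by
  have hd : 0 < d := hb.trans_lt hbd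
  have hBK : B * K = 0 := by
    rw [hB, hK]; ext i j; fin_cases i; fin_cases j; simp [Matrix.mul_apply]
  have hA₁K : A₁ * K = Bᴴ := by
    have : (d : ℂ) ≠ 0 := by exact_mod_cast hd.ne'
    rw [hA₁, hK, hB]; ext i j
    fin_cases i <;> fin_cases j <;> simp [Matrix.mul_apply] <;> field_simp
  have hnK : ‖K‖ = b / d := by
    rw [hK, l2_opNorm_col_neg_self, abs_of_nonneg (by positivity)]
    field_simp
  have hnB : ‖B‖ = b := by
    rw [hB, l2_opNorm_row_self, abs_of_nonneg (by positivity)]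
    field_simp
  have hspec : specDist (spectrum ℂ A₀) (spectrum ℂ A₁) = d := by
    rw [hA₀, hA₁, spectrum.zero_eq, spectrum_diagonal_fin_two]
    refine specDist_singleton_of_forall_dist_eq (Set.insert_nonempty _ _) ?_
    rintro t (rfl | rfl) <;> simp [dist_eq_norm, abs_of_pos hd]
  refine ⟨?_, hnK, by rw [hnK, hnB, hspec]⟩
  rw [hA₀, Matrix.mul_assoc, hBK, hA₁K]
  simp
end

section
/- Let b, d be real numbers with 0 ≤ b < d, A₀ = 0, A₁ = diag(-d,d), B = (b/√2, b/√2), K = (-b/(√2 d), b/(√2 d))ᵀ, and set Z₁ = A₁ - B*K*. Then spec(Z₁) = {-√(d² - b²), √(d² - b²)} and ‖K‖ = ‖B‖ / √(dist(spec(A₀), spec(Z₁))² + ‖B‖²). -/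
/-!
`Z₁` has trace `0` and determinant `b² - d²`, so its eigenvalues are `±√(d² - b²)`, and their
distance to `spec A₀ = {0}` is `√(d² - b²)`. A one-row or one-column matrix has operator norm
equal to the Euclidean length of its entries, so `‖B‖ = b` and `‖K‖ = b / d`; the identity then
reads `b / d = b / √((d² - b²) + b²)`.
-/

open Matrix
open scoped Matrix.Norms.L2Operator

namespace Matrix

variable {𝕜 : Type*} [RCLike 𝕜] {m n ι : Type*} [Fintype m] [Fintype n] [DecidableEq n]
  [Fintype ι] [DecidableEq ι] [Unique ι]

lemma l2_opNorm_of_unique (M : Matrix ι ι 𝕜) : ‖M‖ = ‖M default default‖ := by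
  have hM : M = diagonal fun _ => M default default := by
    ext i j
    simp [Subsingleton.elim i default, Subsingleton.elim j default]
  conv_lhs => rw [hM]
  rw [l2_opNorm_diagonal, pi_norm_const]

lemma l2_opNorm_sq_of_unique_col (K : Matrix m ι 𝕜) : ‖K‖ ^ 2 = ∑ i, ‖K i default‖ ^ 2 := by
  rw [sq, ← l2_opNorm_conjTranspose_mul_self, l2_opNorm_of_unique]
  simp only [mul_apply, conjTranspose_apply, RCLike.star_def, RCLike.conj_mul]
  norm_cast
  exact abs_of_nonneg (by positivity)

lemma l2_opNorm_sq_of_unique_row (B : Matrix ι n 𝕜) : ‖B‖ ^ 2 = ∑ j, ‖B default j‖ ^ 2 := by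
  rw [← l2_opNorm_conjTranspose, l2_opNorm_sq_of_unique_col]
  simp

lemma spectrum_fin_two_of_trace_eq_zero {K : Type*} [Field K] (M : Matrix (Fin 2) (Fin 2) K)
    (z : K) (htr : M.trace = 0) (hdet : M.det = -z ^ 2) : spectrum K M = {-z, z} := by
  ext μ
  rw [mem_spectrum_iff_isRoot_charpoly, charpoly_fin_two, htr, hdet]
  simp [← sub_eq_add_neg, sub_eq_zero, sq_eq_sq_iff_eq_or_eq_neg, or_comm]

end Matrix

lemma specDist_zero_neg_pair (z : ℂ) : specDist {0} {-z, z} = ‖z‖ := by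
  rw [specDist, Set.image2_singleton_left, Set.image_pair]
  simp [dist_eq_norm]

theorem stmt11 (b d : ℝ) (hb : 0 ≤ b) (hbd : b < d)
    (A₀ : Matrix (Fin 1) (Fin 1) ℂ) (hA₀ : A₀ = 0)
    (A₁ : Matrix (Fin 2) (Fin 2) ℂ) (hA₁ : A₁ = !![-(d : ℂ), 0; 0, (d : ℂ)])
    (B : Matrix (Fin 1) (Fin 2) ℂ)
    (hB : B = !![((b / Real.sqrt 2 : ℝ) : ℂ), ((b / Real.sqrt 2 : ℝ) : ℂ)])
    (K : Matrix (Fin 2) (Fin 1) ℂ)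
    (hK : K = !![((-(b / (Real.sqrt 2 * d)) : ℝ) : ℂ); ((b / (Real.sqrt 2 * d) : ℝ) : ℂ)])
    (Z₁ : Matrix (Fin 2) (Fin 2) ℂ) (hZ₁ : Z₁ = A₁ - Bᴴ * Kᴴ) :
    spectrum ℂ Z₁ = {(-(Real.sqrt (d ^ 2 - b ^ 2)) : ℂ), ((Real.sqrt (d ^ 2 - b ^ 2) : ℝ) : ℂ)} ∧
      ‖K‖ = ‖B‖ / Real.sqrt ((specDist (spectrum ℂ A₀) (spectrum ℂ Z₁)) ^ 2 + ‖B‖ ^ 2) := by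
  have hd : 0 < d := hb.trans_lt hbd
  set s := Real.sqrt (d ^ 2 - b ^ 2)
  have hs : s ^ 2 = d ^ 2 - b ^ 2 := Real.sq_sqrt (by nlinarith)
  have h2 : Real.sqrt 2 ^ 2 = 2 := Real.sq_sqrt zero_le_two
  have hspec : spectrum ℂ Z₁ = {-(s : ℂ), (s : ℂ)} := by
    subst hZ₁ hA₁ hB hK
    apply spectrum_fin_two_of_trace_eq_zero
    · simp [trace_fin_two, mul_apply]
    · have hc : 2 * d * (b / Real.sqrt 2 * (b / (Real.sqrt 2 * d))) = b ^ 2 := by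
        field_simp
        rw [h2, mul_comm]
      have hcC : 2 * (d : ℂ) * (b / (Real.sqrt 2 : ℂ) * (b / ((Real.sqrt 2 : ℂ) * d))) = b ^ 2 := by
        exact_mod_cast hc
      have hsC : (s : ℂ) ^ 2 = d ^ 2 - b ^ 2 := by exact_mod_cast hs
      simp only [Complex.ofReal_div, Complex.ofReal_neg, Complex.ofReal_mul, det_fin_two,
        Fin.isValue, Matrix.sub_apply, of_apply, cons_val', cons_val_zero, cons_val_fin_one,
        mul_apply, Finset.univ_unique, Fin.default_eq_zero, conjTranspose_apply, star_div₀,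
        RCLike.star_def, Complex.conj_ofReal, star_neg, star_mul', mul_neg, Finset.sum_neg_distrib,
        Finset.sum_const, Finset.card_singleton, one_smul, sub_neg_eq_add, cons_val_one, zero_sub,
        zero_add, neg_mul]
      linear_combination hcC + hsC
  have hBn : ‖B‖ = b := by
    rw [← sq_eq_sq₀ (norm_nonneg _) hb, l2_opNorm_sq_of_unique_row, hB]
    simp [Fin.sum_univ_two, div_pow, h2]
  have hKn : ‖K‖ = b / d := by
    rw [← sq_eq_sq₀ (norm_nonneg _) (by positivity), l2_opNorm_sq_of_unique_col, hK]
    simp [Fin.sum_univ_two, div_pow, mul_pow, h2]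
    ring
  refine ⟨hspec, ?_⟩
  rw [hspec, hA₀, spectrum.zero_eq, specDist_zero_neg_pair, Complex.norm_real, Real.norm_eq_abs,
    sq_abs, hs, hBn, hKn, sub_add_cancel, Real.sqrt_sq hd.le]
end

section
/- Let b, d be real numbers with 0 < b < d/2 and κ = b/(d/2 + √(d²/4 - b²)). Then κ = tan((1/2) · arctan(2b / (2√(d²/4 - b²)))), i.e., the bound tan Θ ≤ tan((1/2) arctan(2‖B‖/δ)) is attained with equality in the 1×1 example. -/
/-!
With `s = √(d²/4 - b²)` and `θ = arctan (b / s)` one has `cos θ = s / (d/2)` and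
`sin θ = b / (d/2)`, so the half-angle formula `tan (θ/2) = sin θ / (1 + cos θ)` gives
`tan (θ/2) = b / (d/2 + s)`.
-/

open Real

/-- Holds for every `θ`: where `cos (θ/2) = 0` both sides are `0` by the convention `x / 0 = 0`. -/
theorem Real.tan_div_two_eq_sin_div_one_add_cos (θ : ℝ) :
    tan (θ / 2) = sin θ / (1 + cos θ) := by
  obtain ⟨φ, rfl⟩ : ∃ φ, θ = 2 * φ := ⟨θ / 2, by ring⟩
  rw [mul_div_cancel_left₀ _ two_ne_zero, sin_two_mul, cos_two_mul, tan_eq_sin_div_cos]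
  by_cases h : cos φ = 0
  · simp [h]
  · field_simp
    ring

theorem Real.tan_arctan_div_two (x : ℝ) : tan (arctan x / 2) = x / (1 + √(1 + x ^ 2)) := by
  have hroot : 0 < √(1 + x ^ 2) := sqrt_pos.mpr (by positivity)
  rw [tan_div_two_eq_sin_div_one_add_cos, sin_arctan, cos_arctan]
  field_simp
  ring

theorem stmt13 (b d : ℝ) (hb : 0 < b) (hbd : b < d / 2) :
    b / (d / 2 + Real.sqrt (d ^ 2 / 4 - b ^ 2)) =
      Real.tan (1 / 2 *
        Real.arctan (2 * b / (2 * Real.sqrt (d ^ 2 / 4 - b ^ 2)))) := by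
  set s := √(d ^ 2 / 4 - b ^ 2)
  have hdisc : 0 < d ^ 2 / 4 - b ^ 2 := by nlinarith
  have hs : 0 < s := sqrt_pos.mpr hdisc
  have hroot : √(1 + (b / s) ^ 2) = d / 2 / s := by
    have hsq : 1 + (b / s) ^ 2 = (d / 2 / s) ^ 2 := by
      field_simp
      rw [sq_sqrt hdisc.le]
      ring
    rw [hsq, sqrt_sq (div_nonneg (by linarith) hs.le)]
  rw [mul_div_mul_left _ _ two_ne_zero, one_div_mul_eq_div, tan_arctan_div_two, hroot]
  field_simp
  ring
end

section
/- Let A₀, A₁ be closed densely defined operators on Hilbert spaces H₀, H₁, let B : H₁ → H₀ and C : H₀ → H₁ be bounded, and let L = [[A₀, B],[C, A₁]] with domain Dom(A₀) ⊕ Dom(A₁) act on H₀ ⊕ H₁. If λ ∈ ρ(A₀) ∩ ρ(A₁) and ‖B (A₁ - λ)⁻¹ C (A₀ - λ)⁻¹‖ < 1, then λ ∈ ρ(L). -/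
open ContinuousLinearMap in
theorem stmt14 {H₀ H₁ : Type*}
    [NormedAddCommGroup H₀] [InnerProductSpace ℂ H₀] [CompleteSpace H₀]
    [NormedAddCommGroup H₁] [InnerProductSpace ℂ H₁] [CompleteSpace H₁]
    -- `A₀` and `A₁` are closed, densely defined (possibly unbounded) operators
    (A₀ : H₀ →ₗ.[ℂ] H₀) (A₁ : H₁ →ₗ.[ℂ] H₁)
    (hA₀dense : Dense (A₀.domain : Set H₀)) (hA₁dense : Dense (A₁.domain : Set H₁))
    (hA₀closed : IsClosed (A₀.graph : Set (H₀ × H₀)))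
    (hA₁closed : IsClosed (A₁.graph : Set (H₁ × H₁)))
    (B : H₁ →L[ℂ] H₀) (C : H₀ →L[ℂ] H₁) (lam : ℂ)
    -- `lam ∈ ρ(A₀)`, with resolvent `R₀ = (A₀ - lam)⁻¹`:
    (R₀ : H₀ →L[ℂ] H₀) (hR₀mem : ∀ x, R₀ x ∈ A₀.domain)
    (hR₀right : ∀ x : H₀, A₀ ⟨R₀ x, hR₀mem x⟩ - lam • R₀ x = x)
    (hR₀left : ∀ y : A₀.domain, R₀ (A₀ y - lam • (y : H₀)) = y)
    -- `lam ∈ ρ(A₁)`, with resolvent `R₁ = (A₁ - lam)⁻¹`: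
    (R₁ : H₁ →L[ℂ] H₁) (hR₁mem : ∀ x, R₁ x ∈ A₁.domain)
    (hR₁right : ∀ x : H₁, A₁ ⟨R₁ x, hR₁mem x⟩ - lam • R₁ x = x)
    (hR₁left : ∀ y : A₁.domain, R₁ (A₁ y - lam • (y : H₁)) = y)
    -- the smallness condition `‖B (A₁ - lam)⁻¹ C (A₀ - lam)⁻¹‖ < 1`:
    (hnorm : ‖B.comp (R₁.comp (C.comp R₀))‖ < 1) :
    -- conclusion: `lam ∈ ρ(L)` for the block operator matrix
    -- `L = [[A₀, B], [C, A₁]]` with domain `Dom A₀ ⊕ Dom A₁`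
    ∃ R : (H₀ × H₁) →L[ℂ] (H₀ × H₁),
      (∀ z : H₀ × H₁, ∃ (h₀ : (R z).1 ∈ A₀.domain) (h₁ : (R z).2 ∈ A₁.domain),
        (A₀ ⟨(R z).1, h₀⟩ + B (R z).2, C (R z).1 + A₁ ⟨(R z).2, h₁⟩) - lam • R z = z) ∧
      (∀ (x : A₀.domain) (y : A₁.domain),
        R ((A₀ x + B y, C (x : H₀) + A₁ y) - lam • ((x : H₀), (y : H₁))) =
          ((x : H₀), (y : H₁))) := by
  set T : H₀ →L[ℂ] H₀ := B.comp (R₁.comp (C.comp R₀)) with hTdef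
  set u : (H₀ →L[ℂ] H₀)ˣ := Units.oneSub T hnorm with hu
  set U : H₀ →L[ℂ] H₀ := ↑u⁻¹ with hU
  have h1 : ∀ w : H₀, U w - T (U w) = w := by
    intro w
    have := congrArg (fun f : H₀ →L[ℂ] H₀ => f w) u.mul_inv
    simpa [hu, Units.val_oneSub, ContinuousLinearMap.mul_apply,
      ContinuousLinearMap.sub_apply, ContinuousLinearMap.one_apply] using this
  have h2 : ∀ w : H₀, U (w - T w) = w := by
    intro w
    have := congrArg (fun f : H₀ →L[ℂ] H₀ => f w) u.inv_mul
    simpa [hu, Units.val_oneSub, ContinuousLinearMap.mul_apply,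
      ContinuousLinearMap.sub_apply, ContinuousLinearMap.one_apply] using this
  set M : (H₀ × H₁) →L[ℂ] H₀ :=
    R₀.comp (U.comp ((fst ℂ H₀ H₁) - B.comp (R₁.comp (snd ℂ H₀ H₁)))) with hM
  set N : (H₀ × H₁) →L[ℂ] H₁ := R₁.comp ((snd ℂ H₀ H₁) - C.comp M) with hN
  refine ⟨M.prod N, ?_, ?_⟩
  · intro z
    refine ⟨hR₀mem _, hR₁mem _, ?_⟩
    have hMz : M z = R₀ (U (z.1 - B (R₁ z.2))) := rfl
    have hNz : N z = R₁ (z.2 - C (M z)) := rfl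
    ext
    · show A₀ ⟨M z, _⟩ + B (N z) - lam • M z = z.1
      have e0 : A₀ ⟨M z, hR₀mem _⟩ - lam • M z = U (z.1 - B (R₁ z.2)) :=
        hR₀right (U (z.1 - B (R₁ z.2)))
      have e1 : A₀ ⟨M z, hR₀mem _⟩ + B (N z) - lam • M z
          = U (z.1 - B (R₁ z.2)) + B (N z) := by
        rw [← e0]; abel
      rw [e1, hNz, hMz]
      have e2 : B (R₁ (z.2 - C (R₀ (U (z.1 - B (R₁ z.2))))))
          = B (R₁ z.2) - T (U (z.1 - B (R₁ z.2))) := by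
        rw [map_sub R₁, map_sub B]; rfl
      rw [e2]
      have := h1 (z.1 - B (R₁ z.2))
      have e3 : U (z.1 - B (R₁ z.2)) - T (U (z.1 - B (R₁ z.2))) = z.1 - B (R₁ z.2) := this
      calc U (z.1 - B (R₁ z.2)) + (B (R₁ z.2) - T (U (z.1 - B (R₁ z.2))))
          = (U (z.1 - B (R₁ z.2)) - T (U (z.1 - B (R₁ z.2)))) + B (R₁ z.2) := by abel
        _ = z.1 := by rw [e3]; abel
    · show C (M z) + A₁ ⟨N z, _⟩ - lam • N z = z.2
      have e0 : A₁ ⟨N z, hR₁mem _⟩ - lam • N z = z.2 - C (M z) :=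
        hR₁right (z.2 - C (M z))
      calc C (M z) + A₁ ⟨N z, hR₁mem _⟩ - lam • N z
          = C (M z) + (A₁ ⟨N z, hR₁mem _⟩ - lam • N z) := by abel
        _ = C (M z) + (z.2 - C (M z)) := by rw [e0]
        _ = z.2 := by abel
  · intro x y
    set p : H₀ × H₁ := (A₀ x + B y, C (x : H₀) + A₁ y) - lam • ((x : H₀), (y : H₁)) with hp
    have hp1 : p.1 = A₀ x + B y - lam • (x : H₀) := rfl
    have hp2 : p.2 = C (x : H₀) + A₁ y - lam • (y : H₁) := rfl
    have hRy : R₁ p.2 = R₁ (C (x : H₀)) + (y : H₁) := by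
      have := hR₁left y
      rw [hp2]
      have e : C (x : H₀) + A₁ y - lam • (y : H₁)
          = C (x : H₀) + (A₁ y - lam • (y : H₁)) := by abel
      rw [e, map_add, this]
    set a : H₀ := A₀ x - lam • (x : H₀) with ha
    have hw : p.1 - B (R₁ p.2) = a - T a := by
      have hTa : T a = B (R₁ (C (x : H₀))) := by
        show B (R₁ (C (R₀ a))) = B (R₁ (C (x : H₀)))
        rw [ha, hR₀left x]
      rw [hRy, hp1, map_add, hTa, ha]; abel
    have hMp : M p = (x : H₀) := by
      show R₀ (U (p.1 - B (R₁ p.2))) = (x : H₀)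
      rw [hw, h2 a, ha, hR₀left x]
    have hNp : N p = (y : H₁) := by
      show R₁ (p.2 - C (M p)) = (y : H₁)
      rw [hMp, hp2]
      have e : C (x : H₀) + A₁ y - lam • (y : H₁) - C (x : H₀)
          = A₁ y - lam • (y : H₁) := by abel
      rw [e, hR₁left y]
    show (M p, N p) = ((x : H₀), (y : H₁))
    rw [hMp, hNp]
end

section
/- Let A₀, A₁ be bounded self-adjoint operators on Hilbert spaces H₀, H₁ with spectra σ₀, σ₁ satisfying d := dist(σ₀, σ₁) > 0, and let B : H₁ → H₀, C : H₀ → H₁ be bounded with √(‖B‖‖C‖) < d/2. If λ ∈ ℂ satisfies dist(λ, σ₀ ∪ σ₁) > r_V, where r_V = √(‖B‖‖C‖) · tan((1/2) arcsin(2√(‖B‖‖C‖)/d)), and furthermore dist(Re λ, σ_i) ≥ d - r_V and dist(λ, σ_{1-i}) > r_V for some i ∈ {0,1}, then ‖B(A₁-λ)⁻¹C(A₀-λ)⁻¹‖ < 1 and hence λ belongs to the resolvent set of the block operator matrix L = [[A₀,B],[C,A₁]]. -/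
/-!
For normal `Aᵢ`, `‖(Aᵢ - λ)⁻¹‖ ≤ 1 / dist(λ, σᵢ)`, so `K = B (A₁ - λ)⁻¹ C (A₀ - λ)⁻¹` has
`‖K‖ ≤ ‖B‖‖C‖ / (dist(λ, σ₀) dist(λ, σ₁))`. By the tangent half-angle formula `r_V` is the smaller
root of `r (d - r) = ‖B‖‖C‖`. One distance exceeds `r_V`, and since the spectra are real the other
is at least `dist(Re λ, σᵢ) ≥ d - r_V`; hence the product of the distances exceeds `‖B‖‖C‖` and
`‖K‖ < 1`. Finally `L - λ` is invertible because its Schur complement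
`A₀ - λ - B (A₁ - λ)⁻¹ C = (1 - K)(A₀ - λ)` is.
-/

open Metric ContinuousLinearMap

open Real in
theorem mul_tan_half_arcsin_spec {c d r : ℝ} (hc : 0 ≤ c) (hcd : 2 * c < d)
    (hr : r = c * tan (1 / 2 * arcsin (2 * c / d))) :
    0 ≤ r ∧ r < d / 2 ∧ r * (d - r) = c ^ 2 := by
  have hd : 0 < d := by linarith
  set x := 2 * c / d with hx
  have hx0 : 0 ≤ x := by positivity
  have hx1 : x < 1 := (div_lt_one hd).2 hcd
  set φ := 1 / 2 * arcsin x
  set t := tan φ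
  have hφ0 : 0 ≤ φ := by have := arcsin_nonneg.2 hx0; positivity
  have hφ : φ < π / 4 := by have := arcsin_lt_pi_div_two.2 hx1; simp only [φ]; linarith
  have ht0 : 0 ≤ t := tan_nonneg_of_nonneg_of_le_pi_div_two hφ0 (by linarith [pi_pos])
  have ht1 : t < 1 := tan_pi_div_four ▸
    tan_lt_tan_of_lt_of_lt_pi_div_two (by linarith [pi_pos]) (by linarith [pi_pos]) hφ
  have hsin : x = 2 * t / (1 + t ^ 2) := by
    have h := sin_eq_two_mul_tan_half_div_one_add_tan_half_sq (arcsin x)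
    rwa [sin_arcsin (by linarith) hx1.le, show arcsin x / 2 = φ by ring] at h
  have hkey : c * (1 + t ^ 2) = d * t := by
    rw [hx, div_eq_div_iff hd.ne' (by positivity)] at hsin
    linarith
  refine ⟨hr ▸ mul_nonneg hc ht0, ?_, ?_⟩
  · rw [hr]; nlinarith
  · rw [hr]; linear_combination (-c) * hkey

theorem Complex.infDist_re_le_infDist {s : Set ℂ} (hs : ∀ μ ∈ s, μ.im = 0) (z : ℂ) :
    infDist (z.re : ℂ) s ≤ infDist z s := by
  rcases s.eq_empty_or_nonempty with rfl | hne
  · simp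
  refine (le_infDist hne).2 fun μ hμ => (infDist_le_dist_of_mem hμ).trans ?_
  rw [Complex.dist_eq_re_im, Complex.dist_eq_re_im, hs μ hμ]
  apply Real.sqrt_le_sqrt
  simp only [Complex.ofReal_re, Complex.ofReal_im]
  nlinarith [sq_nonneg z.im]

theorem IsStarNormal.norm_inverse_sub_smul_one_le {A : Type*} [CStarAlgebra A] {a : A}
    [IsStarNormal a] {z : ℂ} (hz : 0 < infDist z (spectrum ℂ a)) :
    ‖Ring.inverse (a - z • 1)‖ ≤ (infDist z (spectrum ℂ a))⁻¹ := by
  have hne : ∀ μ ∈ spectrum ℂ a, μ - z ≠ 0 := fun μ hμ h =>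
    (infDist_zero_of_mem (sub_eq_zero.1 h ▸ hμ)).not_gt hz
  have hcfc : a - z • 1 = cfc (fun μ => μ - z) a := by
    rw [cfc_sub .., cfc_id' .., cfc_const .., Algebra.algebraMap_eq_smul_one]
  rw [hcfc, ← cfc_inv _ _ hne]
  refine norm_cfc_le (by positivity) fun μ hμ => ?_
  rw [norm_inv, ← dist_eq_norm, dist_comm]
  exact inv_anti₀ hz (infDist_le_dist_of_mem hμ)

theorem isUnit_sub_smul_one_of_notMem_spectrum {R A : Type*} [CommSemiring R] [Ring A]
    [Algebra R A] {a : A} {z : R} (h : z ∉ spectrum R a) : IsUnit (a - z • 1) := by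
  simpa [Algebra.algebraMap_eq_smul_one] using (spectrum.notMem_iff.1 h).neg

section BlockOp

variable {𝕜 E F : Type*} [NontriviallyNormedField 𝕜]
  [NormedAddCommGroup E] [NormedSpace 𝕜 E] [NormedAddCommGroup F] [NormedSpace 𝕜 F]

noncomputable def blockOp (a : E →L[𝕜] E) (b : F →L[𝕜] E) (c : E →L[𝕜] F) (e : F →L[𝕜] F) :
    E × F →L[𝕜] E × F :=
  (a.comp (fst 𝕜 E F) + b.comp (snd 𝕜 E F)).prod (c.comp (fst 𝕜 E F) + e.comp (snd 𝕜 E F))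

@[simp]
theorem blockOp_apply (a : E →L[𝕜] E) (b : F →L[𝕜] E) (c : E →L[𝕜] F) (e : F →L[𝕜] F)
    (x : E × F) : blockOp a b c e x = (a x.1 + b x.2, c x.1 + e x.2) :=
  rfl

theorem isUnit_blockOp_upper (b : F →L[𝕜] E) : IsUnit (blockOp 1 b 0 1) :=
  ⟨⟨_, blockOp 1 (-b) 0 1, by ext <;> simp, by ext <;> simp⟩, rfl⟩

theorem isUnit_blockOp_lower (c : E →L[𝕜] F) : IsUnit (blockOp 1 0 c 1) :=
  ⟨⟨_, blockOp 1 0 (-c) 1, by ext <;> simp, by ext <;> simp⟩, rfl⟩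

theorem isUnit_blockOp_diag {a : E →L[𝕜] E} {e : F →L[𝕜] F} (ha : IsUnit a) (he : IsUnit e) :
    IsUnit (blockOp a 0 0 e) := by
  obtain ⟨a, rfl⟩ := ha
  obtain ⟨e, rfl⟩ := he
  refine ⟨⟨_, blockOp ↑a⁻¹ 0 0 ↑e⁻¹, ?_, ?_⟩, rfl⟩ <;> ext <;> simp [← mul_apply_eq_comp]

theorem isUnit_blockOp_of_isUnit_schur {a : E →L[𝕜] E} {b : F →L[𝕜] E} {c : E →L[𝕜] F}
    {e : F →L[𝕜] F} (he : IsUnit e) (hs : IsUnit (a - b.comp ((Ring.inverse e).comp c))) :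
    IsUnit (blockOp a b c e) := by
  set r := Ring.inverse e
  have her : ∀ y, e (r y) = y := fun y => by
    rw [← mul_apply_eq_comp, Ring.mul_inverse_cancel e he, one_apply_eq_self]
  have hre : ∀ y, r (e y) = y := fun y => by
    rw [← mul_apply_eq_comp, Ring.inverse_mul_cancel e he, one_apply_eq_self]
  have hfactor : blockOp a b c e = blockOp 1 (b.comp r) 0 1 *
      (blockOp (a - b.comp (r.comp c)) 0 0 e * blockOp 1 0 (r.comp c) 1) := by
    ext x <;> simp [her, hre]
  rw [hfactor]
  exact (isUnit_blockOp_upper _).mul ((isUnit_blockOp_diag hs he).mul (isUnit_blockOp_lower _))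

theorem algebraMap_sub_blockOp (z : 𝕜) (a : E →L[𝕜] E) (b : F →L[𝕜] E) (c : E →L[𝕜] F)
    (e : F →L[𝕜] F) :
    algebraMap 𝕜 _ z - blockOp a b c e = -blockOp (a - z • 1) b c (e - z • 1) := by
  ext x <;> simp [Algebra.algebraMap_eq_smul_one]

theorem notMem_spectrum_blockOp [CompleteSpace E] {a : E →L[𝕜] E} {e : F →L[𝕜] F} {z : 𝕜}
    (b : F →L[𝕜] E) (c : E →L[𝕜] F) (ha : z ∉ spectrum 𝕜 a) (he : z ∉ spectrum 𝕜 e)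
    (h : ‖b.comp ((Ring.inverse (e - z • 1)).comp (c.comp (Ring.inverse (a - z • 1))))‖ < 1) :
    z ∉ spectrum 𝕜 (blockOp a b c e) := by
  have ha' := isUnit_sub_smul_one_of_notMem_spectrum ha
  have he' := isUnit_sub_smul_one_of_notMem_spectrum he
  have hschur : (a - z • 1) - b.comp ((Ring.inverse (e - z • 1)).comp c) =
      (1 - b.comp ((Ring.inverse (e - z • 1)).comp (c.comp (Ring.inverse (a - z • 1))))) *
        (a - z • 1) := by
    rw [sub_mul, one_mul, mul_def, comp_assoc, comp_assoc, comp_assoc, ← mul_def,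
      Ring.inverse_mul_cancel _ ha', one_def, comp_id]
  rw [spectrum.notMem_iff, algebraMap_sub_blockOp]
  refine IsUnit.neg (α := E × F →L[𝕜] E × F) (isUnit_blockOp_of_isUnit_schur he' ?_)
  rw [hschur]
  exact (isUnit_one_sub_of_norm_lt_one h).mul ha'

end BlockOp

theorem norm_comp_inverse_sub_smul_one_lt_one {H₀ H₁ : Type*}
    [NormedAddCommGroup H₀] [InnerProductSpace ℂ H₀] [CompleteSpace H₀]
    [NormedAddCommGroup H₁] [InnerProductSpace ℂ H₁] [CompleteSpace H₁]
    {A₀ : H₀ →L[ℂ] H₀} {A₁ : H₁ →L[ℂ] H₁} [IsStarNormal A₀] [IsStarNormal A₁]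
    (B : H₁ →L[ℂ] H₀) (C : H₀ →L[ℂ] H₁) {z : ℂ}
    (h₀ : 0 < infDist z (spectrum ℂ A₀)) (h₁ : 0 < infDist z (spectrum ℂ A₁))
    (h : ‖B‖ * ‖C‖ < infDist z (spectrum ℂ A₀) * infDist z (spectrum ℂ A₁)) :
    ‖B.comp ((Ring.inverse (A₁ - z • 1)).comp (C.comp (Ring.inverse (A₀ - z • 1))))‖ < 1 := by
  calc _ ≤ ‖B‖ * (‖Ring.inverse (A₁ - z • 1)‖ * (‖C‖ * ‖Ring.inverse (A₀ - z • 1)‖)) := by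
        refine (opNorm_comp_le _ _).trans (mul_le_mul_of_nonneg_left ?_ (norm_nonneg _))
        exact (opNorm_comp_le _ _).trans
          (mul_le_mul_of_nonneg_left (opNorm_comp_le _ _) (norm_nonneg _))
    _ ≤ ‖B‖ * ((infDist z (spectrum ℂ A₁))⁻¹ * (‖C‖ * (infDist z (spectrum ℂ A₀))⁻¹)) := by
        gcongr
        · exact IsStarNormal.norm_inverse_sub_smul_one_le h₁
        · exact IsStarNormal.norm_inverse_sub_smul_one_le h₀
    _ = ‖B‖ * ‖C‖ / (infDist z (spectrum ℂ A₀) * infDist z (spectrum ℂ A₁)) := by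
        field_simp
    _ < 1 := (div_lt_one (by positivity)).2 h

open ContinuousLinearMap in
theorem stmt15 {H₀ H₁ : Type*}
    [NormedAddCommGroup H₀] [InnerProductSpace ℂ H₀] [CompleteSpace H₀]
    [NormedAddCommGroup H₁] [InnerProductSpace ℂ H₁] [CompleteSpace H₁]
    (A₀ : H₀ →L[ℂ] H₀) (A₁ : H₁ →L[ℂ] H₁)
    (hA₀ : IsSelfAdjoint A₀) (hA₁ : IsSelfAdjoint A₁)
    (B : H₁ →L[ℂ] H₀) (C : H₀ →L[ℂ] H₁)
    (σ₀ σ₁ : Set ℂ) (hσ₀ : σ₀ = spectrum ℂ A₀) (hσ₁ : σ₁ = spectrum ℂ A₁)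
    (d : ℝ) (hd : d = sInf (Set.image2 dist σ₀ σ₁)) (hdpos : 0 < d)
    (hBC : Real.sqrt (‖B‖ * ‖C‖) < d / 2)
    (rV : ℝ)
    (hrV : rV = Real.sqrt (‖B‖ * ‖C‖) *
      Real.tan (1 / 2 * Real.arcsin (2 * Real.sqrt (‖B‖ * ‖C‖) / d)))
    (lam : ℂ) (hfar : rV < Metric.infDist lam (σ₀ ∪ σ₁))
    (hcase :
      (d - rV ≤ Metric.infDist (lam.re : ℂ) σ₀ ∧ rV < Metric.infDist lam σ₁) ∨
      (d - rV ≤ Metric.infDist (lam.re : ℂ) σ₁ ∧ rV < Metric.infDist lam σ₀)) :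
    ‖B.comp ((Ring.inverse (A₁ - lam • 1)).comp
        (C.comp (Ring.inverse (A₀ - lam • 1))))‖ < 1 ∧
      lam ∉ spectrum ℂ
        (((A₀.comp (ContinuousLinearMap.fst ℂ H₀ H₁)) +
            (B.comp (ContinuousLinearMap.snd ℂ H₀ H₁))).prod
          ((C.comp (ContinuousLinearMap.fst ℂ H₀ H₁)) +
            (A₁.comp (ContinuousLinearMap.snd ℂ H₀ H₁)))) := by
  subst hσ₀ hσ₁
  have := hA₀.isStarNormal
  have := hA₁.isStarNormal
  obtain ⟨hne₀, hne₁⟩ : (spectrum ℂ A₀).Nonempty ∧ (spectrum ℂ A₁).Nonempty :=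
    Set.image2_nonempty_iff.1 <| Set.nonempty_iff_ne_empty.2 fun h => by
      rw [h, Real.sInf_empty] at hd
      linarith
  obtain ⟨hrV0, hrVd, hrV_sq⟩ := mul_tan_half_arcsin_spec (Real.sqrt_nonneg _) (by linarith) hrV
  rw [Real.sq_sqrt (by positivity)] at hrV_sq
  have h₀ : rV < infDist lam (spectrum ℂ A₀) :=
    hfar.trans_le (infDist_le_infDist_of_subset Set.subset_union_left hne₀)
  have h₁ : rV < infDist lam (spectrum ℂ A₁) :=
    hfar.trans_le (infDist_le_infDist_of_subset Set.subset_union_right hne₁)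
  have hre₀ := Complex.infDist_re_le_infDist (fun _ => hA₀.im_eq_zero_of_mem_spectrum) lam
  have hre₁ := Complex.infDist_re_le_infDist (fun _ => hA₁.im_eq_zero_of_mem_spectrum) lam
  have hprod : ‖B‖ * ‖C‖ < infDist lam (spectrum ℂ A₀) * infDist lam (spectrum ℂ A₁) := by
    rw [← hrV_sq]
    rcases hcase with ⟨hre, -⟩ | ⟨hre, -⟩
    · rw [mul_comm]
      exact mul_lt_mul' (hre.trans hre₀) h₁ hrV0 (by linarith)
    · exact mul_lt_mul h₀ (hre.trans hre₁) (by linarith) (by linarith)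
  have hK := norm_comp_inverse_sub_smul_one_lt_one B C (hrV0.trans_lt h₀) (hrV0.trans_lt h₁) hprod
  exact ⟨hK, notMem_spectrum_blockOp B C
    (fun h => (infDist_zero_of_mem h).not_gt (hrV0.trans_lt h₀))
    (fun h => (infDist_zero_of_mem h).not_gt (hrV0.trans_lt h₁)) hK⟩
end
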